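/- arXiv:2002.12309 — 6 statements merged into one kernel-verified Lean document; each statement's English description precedes it below -/
import Mathlib

section
/- With F the block of the NB-matrix B of G indexed by the directed edges incident to a node c of degree d, one has F² = 0; in particular F is nilpotent and all of its eigenvalues are zero. -/
open Matrix

/-- The non-backtracking matrix of a simple graph `G`: rows and columns are indexed by
darts (directed edges); entry `(k→l, i→j)` is `δ_{jk} (1 - δ_{il})`. -/
def nbMatrix {V : Type*} [DecidableEq V] (G : SimpleGraph V) :
    Matrix G.Dart G.Dart ℝ := fun r c =>
  (if c.toProd.2 = r.toProd.1 then (1 : ℝ) else 0) *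
  (if c.toProd.1 = r.toProd.2 then 0 else 1)

/-- Darts (directed edges) not incident to the node `c`. -/
abbrev NonIncDart {V : Type*} (G : SimpleGraph V) (c : V) :=
  {e : G.Dart // e.toProd.1 ≠ c ∧ e.toProd.2 ≠ c}

/-- Darts (directed edges) incident to the node `c`. -/
abbrev IncDart {V : Type*} (G : SimpleGraph V) (c : V) :=
  {e : G.Dart // e.toProd.1 = c ∨ e.toProd.2 = c}

/-- The block `B'` of the NB-matrix: rows and columns indexed by darts not incident to `c`. -/
def blockB' {V : Type*} [DecidableEq V] (G : SimpleGraph V) (c : V) :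
    Matrix (NonIncDart G c) (NonIncDart G c) ℝ := fun r s => nbMatrix G r.val s.val

/-- The block `D`: rows indexed by darts not incident to `c`, columns by darts incident to `c`. -/
def blockD {V : Type*} [DecidableEq V] (G : SimpleGraph V) (c : V) :
    Matrix (NonIncDart G c) (IncDart G c) ℝ := fun r s => nbMatrix G r.val s.val

/-- The block `E`: rows indexed by darts incident to `c`, columns by darts not incident to `c`. -/
def blockE {V : Type*} [DecidableEq V] (G : SimpleGraph V) (c : V) :
    Matrix (IncDart G c) (NonIncDart G c) ℝ := fun r s => nbMatrix G r.val s.val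

/-- The block `F`: rows and columns indexed by darts incident to `c`. -/
def blockF {V : Type*} [DecidableEq V] (G : SimpleGraph V) (c : V) :
    Matrix (IncDart G c) (IncDart G c) ℝ := fun r s => nbMatrix G r.val s.val

theorem blockF_sq_eq_zero {V : Type*} [Fintype V] [DecidableEq V]
    (G : SimpleGraph V) [DecidableRel G.Adj] (c : V) :
    blockF G c * blockF G c = 0 ∧ IsNilpotent (blockF G c) ∧
      ∀ μ : ℝ, Module.End.HasEigenvalue (Matrix.toLin' (blockF G c)) μ → μ = 0 := by

  have hF : blockF G c * blockF G c = 0 := by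
    ext r t
    simp only [Matrix.mul_apply, Matrix.zero_apply]
    apply Finset.sum_eq_zero
    intro s _
    simp only [blockF, nbMatrix]
    by_cases h1 : s.val.toProd.2 = r.val.toProd.1
    swap
    · simp [h1]
    by_cases h2 : s.val.toProd.1 = r.val.toProd.2
    · simp [h2]
    by_cases h3 : t.val.toProd.2 = s.val.toProd.1
    swap
    · simp [h3]
    by_cases h4 : t.val.toProd.1 = s.val.toProd.2
    · simp [h4]
    exfalso
    have hsne : s.val.toProd.1 ≠ s.val.toProd.2 := s.val.adj.ne
    rcases s.property with hs | hs
    · rcases r.property with hr | hr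
      · exact hsne (hs.trans (h1.trans hr).symm)
      · exact h2 (hs.trans hr.symm)
    · rcases t.property with ht | ht
      · exact h4 (ht.trans hs.symm)
      · exact hsne ((h3.symm.trans ht).trans hs.symm)
  refine ⟨hF, ⟨2, by rw [pow_two]; exact hF⟩, ?_⟩
  intro μ hμ
  obtain ⟨v, hv⟩ := hμ.exists_hasEigenvector
  have h2 : (μ * μ) • v = 0 := by
    have := congrArg (fun M => Matrix.toLin' M v) hF
    simpa [Matrix.toLin'_mul, hv.apply_eq_smul, smul_smul] using this
  rcases smul_eq_zero.mp h2 with h | h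
  · exact (mul_self_eq_zero).mp h
  · exact absurd h hv.right
end

section
/- With F the 2d × 2d block of the NB-matrix B of G indexed by the directed edges incident to a node c of degree d, det(F − tI) = t^{2d} for every real t; equivalently, the characteristic polynomial of F is t^{2d}. -/
/-!
`F (r, s) ≠ 0` means that the walk `s` then `r` is non-backtracking; as both darts touch `c`,
this forces `r` to leave `c` and `s` to enter it, so `s` does not leave `c`. Hence `F ^ 2 = 0`,
and the characteristic polynomial of a nilpotent matrix over a domain is `X ^ n`.
-/

open Matrix

open Polynomial

namespace Matrix

variable {n R : Type*} [Fintype n]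

theorem mul_self_eq_zero_of_apply_ne_zero [NonUnitalNonAssocSemiring R] (p : n → Prop)
    {M : Matrix n n R} (hM : ∀ i j, M i j ≠ 0 → p i ∧ ¬p j) : M * M = 0 := by
  ext i k
  refine Finset.sum_eq_zero fun j _ => ?_
  by_cases hij : M i j = 0
  · simp [hij]
  by_cases hjk : M j k = 0
  · simp [hjk]
  exact absurd (hM j k hjk).1 (hM i j hij).2

variable [DecidableEq n]

theorem charpoly_eq_X_pow_of_isNilpotent [CommRing R] [NoZeroDivisors R] {M : Matrix n n R}
    (hM : IsNilpotent M) : M.charpoly = X ^ Fintype.card n :=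
  sub_eq_zero.mp (isNilpotent_charpoly_sub_pow_of_isNilpotent hM).eq_zero

theorem det_sub_smul_one_of_isNilpotent [CommRing R] [NoZeroDivisors R] {M : Matrix n n R}
    (hM : IsNilpotent M) (t : R) : (M - t • 1).det = (-t) ^ Fintype.card n := by
  rw [← neg_sub, det_neg, smul_one_eq_diagonal, ← scalar_apply, ← eval_charpoly,
    charpoly_eq_X_pow_of_isNilpotent hM, eval_pow, eval_X, ← mul_pow, neg_one_mul]

end Matrix

section NonBacktracking

variable {V : Type*} [DecidableEq V] (G : SimpleGraph V) (c : V)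

theorem nbMatrix_apply_ne_zero {r s : G.Dart} :
    nbMatrix G r s ≠ 0 ↔ s.snd = r.fst ∧ s.fst ≠ r.snd := by
  unfold nbMatrix
  split_ifs <;> simp_all

theorem blockF_apply_ne_zero {r s : IncDart G c} (h : blockF G c r s ≠ 0) :
    r.val.fst = c ∧ s.val.fst ≠ c := by
  obtain ⟨hsr, hback⟩ := (nbMatrix_apply_ne_zero G).mp h
  have hr : r.val.fst = c := by
    rcases r.property with hr | hr
    · exact hr
    · rcases s.property with hs | hs
      · exact absurd (hs.trans hr.symm) hback
      · exact hsr.symm.trans hs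
  exact ⟨hr, fun hs => s.val.fst_ne_snd (hs.trans (hr.symm.trans hsr.symm))⟩

theorem blockF_mul_self [Fintype V] [DecidableRel G.Adj] : blockF G c * blockF G c = 0 :=
  mul_self_eq_zero_of_apply_ne_zero (fun e : IncDart G c => e.val.fst = c) fun _ _ =>
    blockF_apply_ne_zero G c

theorem card_incDart [Fintype V] [DecidableRel G.Adj] :
    Fintype.card (IncDart G c) = 2 * G.degree c := by
  have hdisj : Disjoint (fun e : G.Dart => e.fst = c) (fun e => e.snd = c) := by
    simp only [Pi.disjoint_iff, Prop.disjoint_iff, not_and]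
    exact fun e h1 h2 => e.fst_ne_snd (h1.trans h2.symm)
  have hfst : Fintype.card {e : G.Dart // e.fst = c} = G.degree c := by
    rw [Fintype.card_subtype]
    exact G.dart_fst_fiber_card_eq_degree c
  have hsnd : Fintype.card {e : G.Dart // e.snd = c} = G.degree c :=
    hfst ▸ Fintype.card_congr (SimpleGraph.Dart.symm_involutive.toPerm _ |>.subtypeEquiv fun _ => Iff.rfl)
  rw [Fintype.card_subtype_or_disjoint _ _ hdisj, hfst, hsnd, two_mul]

end NonBacktracking

theorem det_blockF_sub_smul_one {V : Type*} [Fintype V] [DecidableEq V]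
    (G : SimpleGraph V) [DecidableRel G.Adj] (c : V) :
    (∀ t : ℝ, (blockF G c - t • 1).det = t ^ (2 * G.degree c)) ∧
      (blockF G c).charpoly = Polynomial.X ^ (2 * G.degree c) := by
  have hnil : IsNilpotent (blockF G c) := ⟨2, by rw [sq, blockF_mul_self G c]⟩
  refine ⟨fun t => ?_, ?_⟩
  · rw [det_sub_smul_one_of_isNilpotent hnil, card_incDart G c, (even_two_mul _).neg_pow]
  · rw [charpoly_eq_X_pow_of_isNilpotent hnil, card_incDart G c]
end

section
/- With D, F, E the blocks of the NB-matrix B of G relative to a node c, the matrix X = DFE (indexed in rows and columns by the directed edges of G not incident to c) has entries X_{k→l, i→j} = a_{ck} a_{cj} (1 − δ_{kj}), where a is the adjacency matrix of G and δ the Kronecker delta. -/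
open Matrix

/-- The matrix `X = D F E`, indexed by darts not incident to `c`. -/
def blockX {V : Type*} [Fintype V] [DecidableEq V] (G : SimpleGraph V) [DecidableRel G.Adj]
    (c : V) : Matrix (NonIncDart G c) (NonIncDart G c) ℝ :=
  blockD G c * blockF G c * blockE G c

theorem blockX_entries {V : Type*} [Fintype V] [DecidableEq V]
    (G : SimpleGraph V) [DecidableRel G.Adj] (c : V) (r s : NonIncDart G c) :
    blockX G c r s =
      (if G.Adj c r.val.toProd.1 then (1 : ℝ) else 0) *
      (if G.Adj c s.val.toProd.2 then (1 : ℝ) else 0) *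
      (if r.val.toProd.1 = s.val.toProd.2 then 0 else 1) := by
  classical
  by_cases hra : G.Adj c r.val.toProd.1
  · by_cases hsa : G.Adj c s.val.toProd.2
    · set t0 : IncDart G c := ⟨⟨(c, r.val.toProd.1), hra⟩, Or.inl rfl⟩ with ht0
      set u0 : IncDart G c := ⟨⟨(s.val.toProd.2, c), hsa.symm⟩, Or.inr rfl⟩ with hu0
      have hD : ∀ t : IncDart G c, t ≠ t0 → blockD G c r t = 0 := by
        intro t ht
        simp only [blockD, nbMatrix]
        rcases eq_or_ne t.val.toProd.2 r.val.toProd.1 with h2 | h2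
        · exfalso
          apply ht
          have h1 : t.val.toProd.1 = c := by
            rcases t.prop with h | h
            · exact h
            · exact absurd (h2.symm.trans h) r.prop.1
          exact Subtype.ext (SimpleGraph.Dart.ext _ _ (Prod.ext h1 h2))
        · simp [h2]
      have hE : ∀ u : IncDart G c, u ≠ u0 → blockE G c u s = 0 := by
        intro u hu
        simp only [blockE, nbMatrix]
        rcases eq_or_ne s.val.toProd.2 u.val.toProd.1 with h2 | h2
        · exfalso
          apply hu
          have h1 : u.val.toProd.2 = c := by
            rcases u.prop with h | h
            · exact absurd (h2.trans h) s.prop.2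
            · exact h
          exact Subtype.ext (SimpleGraph.Dart.ext _ _ (Prod.ext h2.symm h1))
        · simp [h2]
      have key : blockX G c r s = blockD G c r t0 * blockF G c t0 u0 * blockE G c u0 s := by
        simp only [blockX, Matrix.mul_apply]
        rw [Finset.sum_eq_single u0]
        · rw [Finset.sum_eq_single t0]
          · intro t _ ht; rw [hD t ht, zero_mul]
          · intro h; exact absurd (Finset.mem_univ t0) h
        · intro u _ hu; rw [hE u hu, mul_zero]
        · intro h; exact absurd (Finset.mem_univ u0) h
      rw [key]
      have hrc : ¬ (c = r.val.toProd.2) := fun h => r.prop.2 h.symm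
      have hsc : ¬ (s.val.toProd.1 = c) := s.prop.1
      simp only [blockD, blockE, blockF, nbMatrix, ht0, hu0]
      simp only [if_pos rfl, if_neg hrc, if_neg hsc, hra, hsa, if_true, one_mul, mul_one]
      by_cases h : r.val.toProd.1 = s.val.toProd.2
      · simp [h]
      · simp [h, Ne.symm h]
    · have hE : ∀ u : IncDart G c, blockE G c u s = 0 := by
        intro u
        simp only [blockE, nbMatrix]
        rcases eq_or_ne s.val.toProd.2 u.val.toProd.1 with h2 | h2
        · have h1 : u.val.toProd.2 = c := by
            rcases u.prop with h | h
            · exact absurd (h2.trans h) s.prop.2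
            · exact h
          have hadj := u.val.adj
          rw [← h2, h1] at hadj
          exact absurd hadj.symm hsa
        · simp [h2]
      simp only [blockX, Matrix.mul_apply]
      simp [hE, hsa]
  · have hD : ∀ t : IncDart G c, blockD G c r t = 0 := by
      intro t
      simp only [blockD, nbMatrix]
      rcases eq_or_ne t.val.toProd.2 r.val.toProd.1 with h2 | h2
      · have h1 : t.val.toProd.1 = c := by
          rcases t.prop with h | h
          · exact h
          · exact absurd (h2.symm.trans h) r.prop.1
        have hadj := t.val.adj
        rw [h1, h2] at hadj
        exact absurd hadj hra
      · simp [h2]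
    simp only [blockX, Matrix.mul_apply]
    simp [hD, hra]
end

section
/- If the node c of G has degree 1, then det(B − tI) = t² · det(B' − tI) for all real t, where B is the NB-matrix of G and B' is the NB-matrix of the graph obtained from G by removing c. In particular, removing a degree-1 node does not change the nonzero eigenvalues of the NB-matrix. -/
open Matrix

instance {V : Type*} (G : SimpleGraph V) [DecidableRel G.Adj] (s : Set V) :
    DecidableRel (G.induce s).Adj := fun a b =>
  decidable_of_iff (G.Adj a b) Iff.rfl

/-!
Let `c` be a leaf with neighbour `u`, and sort the darts of `G` into three blocks: the dart
`u → c`, the darts of `G - c`, and the dart `c → u`. A non-backtracking step never passes from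
an earlier block to a later one: the only dart leaving `c` is the reversal of the only dart
entering it, and a dart of `G - c` does not end at `c`. Hence the NB-matrix is block triangular,
and its characteristic polynomial is the product of those of the diagonal blocks, namely `X`,
the characteristic polynomial of the NB-matrix of `G - c`, and `X` again. The determinant
identity is this factorisation evaluated at `t`; the signs `(-1) ^ #darts` agree because `G` has
two more darts than `G - c`.
-/

open Polynomial Finset SimpleGraph

namespace Matrix

variable {n R α : Type*} [Fintype n] [DecidableEq n] [CommRing R]

theorem BlockTriangular.charpoly_fintype [Fintype α] [LinearOrder α] {M : Matrix n n R}
    {b : n → α} (h : M.BlockTriangular b) :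
    M.charpoly = ∏ k : α, (M.toSquareBlock b k).charpoly := by
  refine h.charpoly.trans (prod_subset (subset_univ _) fun k _ hk => ?_)
  have : IsEmpty {i // b i = k} := ⟨fun i => hk <| mem_image.2 ⟨i, mem_univ _, i.2⟩⟩
  exact charpoly_isEmpty

theorem charpoly_toSquareBlock_of_forall_eq_iff [DecidableEq α] (M : Matrix n n R) (b : n → α)
    {k : α} {i : n} (h : ∀ j, b j = k ↔ j = i) :
    (M.toSquareBlock b k).charpoly = X - C (M i i) := by
  let : Unique {j // b j = k} := ⟨⟨⟨i, (h i).2 rfl⟩⟩, fun j => Subtype.ext ((h j).1 j.2)⟩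
  rw [charpoly, det_unique, charmatrix_apply_eq]
  rfl

theorem det_sub_smul_one (M : Matrix n n R) (t : R) :
    (M - t • 1).det = (-1) ^ Fintype.card n * M.charpoly.eval t := by
  rw [eval_charpoly, scalar_apply, ← smul_one_eq_diagonal, ← neg_sub, det_neg]

end Matrix

namespace SimpleGraph

variable {V : Type*} {G : SimpleGraph V}

def induceDartEquiv (s : Set V) :
    (G.induce s).Dart ≃ {d : G.Dart // d.fst ∈ s ∧ d.snd ∈ s} where
  toFun d := ⟨(Embedding.induce s).toHom.mapDart d, d.fst.2, d.snd.2⟩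
  invFun d := ⟨(⟨d.1.fst, d.2.1⟩, ⟨d.1.snd, d.2.2⟩), d.1.adj⟩
  left_inv _ := rfl
  right_inv _ := rfl

variable [DecidableEq V]

def dartBlock (c : V) (d : G.Dart) : Fin 3 :=
  if d.snd = c then 0 else if d.fst = c then 2 else 1

theorem dartBlock_eq_one_iff {c : V} (d : G.Dart) :
    dartBlock c d = 1 ↔ d.fst ∈ {v | v ≠ c} ∧ d.snd ∈ {v | v ≠ c} := by
  unfold dartBlock
  split_ifs <;> simp_all

theorem dartBlock_eq_zero_iff {c u : V} (hu : ∀ w, G.Adj c w ↔ w = u) (d : G.Dart) :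
    dartBlock c d = 0 ↔ d = ⟨(u, c), ((hu u).2 rfl).symm⟩ := by
  have hd := d.adj
  have hcu := G.ne_of_adj ((hu u).2 rfl)
  unfold dartBlock
  split_ifs <;> simp_all [Dart.ext_iff, Prod.ext_iff, G.adj_comm]

theorem dartBlock_eq_two_iff {c u : V} (hu : ∀ w, G.Adj c w ↔ w = u) (d : G.Dart) :
    dartBlock c d = 2 ↔ d = ⟨(c, u), (hu u).2 rfl⟩ := by
  have hd := d.adj
  have hcu := G.ne_of_adj ((hu u).2 rfl)
  unfold dartBlock
  split_ifs <;> simp_all [Dart.ext_iff, Prod.ext_iff, G.adj_comm]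

end SimpleGraph

section

variable {V W : Type*} [DecidableEq V] [DecidableEq W] {G : SimpleGraph V}

theorem nbMatrix_apply (r d : G.Dart) :
    nbMatrix G r d = if d.snd = r.fst ∧ d.fst ≠ r.snd then 1 else 0 := by
  unfold nbMatrix
  split_ifs <;> simp_all

theorem nbMatrix_apply_self (d : G.Dart) : nbMatrix G d d = 0 := by
  simp [nbMatrix_apply, d.adj.ne']

theorem nbMatrix_submatrix_mapDart {H : SimpleGraph W} (f : H ↪g G) :
    (nbMatrix G).submatrix f.toHom.mapDart f.toHom.mapDart = nbMatrix H := by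
  ext r d
  simp [nbMatrix_apply, f.injective.eq_iff]

theorem blockTriangular_nbMatrix_dartBlock {c : V} (hc : (G.neighborSet c).Subsingleton) :
    (nbMatrix G).BlockTriangular (dartBlock c) := by
  intro r d hlt
  rw [nbMatrix_apply, if_neg]
  rintro ⟨hdr, hdr'⟩
  have hdc : d.snd = c ∧ r.fst = c := by
    unfold dartBlock at hlt
    split_ifs at hlt <;> simp_all [Fin.lt_def]
  exact hdr' (hc (hdc.1 ▸ d.adj.symm) (hdc.2 ▸ r.adj))

theorem charpoly_nbMatrix_of_degree_eq_one [Fintype V] [DecidableRel G.Adj] {c : V}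
    (hc : G.degree c = 1) :
    (nbMatrix G).charpoly = X ^ 2 * (nbMatrix (G.induce {v | v ≠ c})).charpoly := by
  obtain ⟨u, hcu, huniq⟩ := degree_eq_one_iff_existsUnique_adj.1 hc
  have hu : ∀ w, G.Adj c w ↔ w = u := fun w => ⟨huniq w, fun h => h ▸ hcu⟩
  have hleaf : (G.neighborSet c).Subsingleton := fun w hw w' hw' =>
    ((hu w).1 hw).trans ((hu w').1 hw').symm
  let e : (G.induce {v | v ≠ c}).Dart ≃ {d // dartBlock c d = 1} :=
    (induceDartEquiv _).trans (Equiv.subtypeEquivRight fun d => (dartBlock_eq_one_iff d).symm)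
  have hmiddle : ((nbMatrix G).toSquareBlock (dartBlock c) 1).charpoly =
      (nbMatrix (G.induce {v | v ≠ c})).charpoly := by
    rw [← charpoly_reindex e.symm, reindex_apply, Equiv.symm_symm]
    exact congrArg charpoly (nbMatrix_submatrix_mapDart (Embedding.induce _))
  rw [(blockTriangular_nbMatrix_dartBlock hleaf).charpoly_fintype, Fin.prod_univ_three, hmiddle,
    charpoly_toSquareBlock_of_forall_eq_iff _ _ (dartBlock_eq_zero_iff hu),
    charpoly_toSquareBlock_of_forall_eq_iff _ _ (dartBlock_eq_two_iff hu),
    nbMatrix_apply_self, nbMatrix_apply_self, C_0, sub_zero]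
  ring

end

theorem det_nbMatrix_removeDegreeOne {V : Type*} [Fintype V] [DecidableEq V]
    (G : SimpleGraph V) [DecidableRel G.Adj] (c : V) (hc : G.degree c = 1) :
    (∀ t : ℝ, (nbMatrix G - t • 1).det =
        t ^ 2 * (nbMatrix (G.induce {v | v ≠ c}) - t • 1).det) ∧
      ∀ μ : ℂ, μ ≠ 0 →
        (((nbMatrix G).charpoly.map (algebraMap ℝ ℂ)).IsRoot μ ↔
          ((nbMatrix (G.induce {v | v ≠ c})).charpoly.map (algebraMap ℝ ℂ)).IsRoot μ) := by
  have hchar := charpoly_nbMatrix_of_degree_eq_one hc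
  have hcard : Fintype.card G.Dart = Fintype.card (G.induce {v | v ≠ c}).Dart + 2 := by
    simpa [natDegree_X_pow_mul 2 (charpoly_monic _).ne_zero] using congrArg natDegree hchar
  refine ⟨fun t => ?_, fun μ hμ => ?_⟩
  · rw [det_sub_smul_one, det_sub_smul_one, hchar, hcard, eval_mul, eval_pow, eval_X]
    ring
  · simp [hchar, hμ]
end

section
/- For every real vector z indexed by the directed edges of G not incident to c, zᵀ P X z = (Σ_i a_{ci} zⁱ)² − Σ_i a_{ci} (zⁱ)², where zⁱ = Σ_{j ≠ c} a_{ij} z_{j→i} (the sum of the entries of z over directed edges j→i not incident to c). -/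
open Matrix

/-- The edge-swap (involution) matrix `P` on vectors indexed by darts not incident to `c`:
`(Pz)_{i→j} = z_{j→i}`. -/
def swapMat {V : Type*} [DecidableEq V] (G : SimpleGraph V) (c : V) :
    Matrix (NonIncDart G c) (NonIncDart G c) ℝ := fun r s =>
  if s.val = r.val.symm then 1 else 0

/-- `zⁱ = Σ_{j ≠ c} a_{ij} z_{j→i}`: the sum of the entries of `z` over darts `j→i`
not incident to `c` and pointing at `i`. -/
def vertSum {V : Type*} [Fintype V] [DecidableEq V] (G : SimpleGraph V) [DecidableRel G.Adj]
    (c : V) (z : NonIncDart G c → ℝ) (i : V) : ℝ :=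
  ∑ e : NonIncDart G c, if e.val.toProd.2 = i then z e else 0


section Aux

variable {V : Type*} [Fintype V] [DecidableEq V] (G : SimpleGraph V) [DecidableRel G.Adj] (c : V)

open SimpleGraph

lemma blockD_apply' (r : NonIncDart G c) (f : IncDart G c) :
    blockD G c r f = if f.val.toProd = (c, r.val.toProd.1) then 1 else 0 := by
  obtain ⟨⟨⟨f1, f2⟩, hf⟩, hinc⟩ := f
  obtain ⟨⟨⟨r1, r2⟩, hr⟩, hr1, hr2⟩ := r
  simp only [blockD, nbMatrix] at *
  by_cases h2 : f2 = r1
  · have hf1 : f1 = c := by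
      rcases hinc with h | h
      · exact h
      · exact absurd (h2 ▸ h) hr1
    have hne : ¬ (c = r2) := fun h => hr2 h.symm
    simp [h2, hf1, hne]
  · have : ¬ ((f1, f2) = (c, r1)) := by
      simp only [Prod.mk.injEq, not_and]
      intro _; exact h2
    simp [h2, this]

lemma blockX_apply (r s : NonIncDart G c) :
    blockX G c r s = (if G.Adj c r.val.toProd.1 then (1:ℝ) else 0) *
      ((if G.Adj c s.val.toProd.2 then (1:ℝ) else 0) *
        (if s.val.toProd.2 = r.val.toProd.1 then (0:ℝ) else 1)) := by
  have hXe : blockX G c r s =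
      ∑ f : IncDart G c, blockD G c r f * ∑ g : IncDart G c, blockF G c f g * blockE G c g s := by
    simp only [blockX, Matrix.mul_apply, Finset.sum_mul, Finset.mul_sum, mul_assoc]
    exact Finset.sum_comm
  rw [hXe]
  by_cases h1 : G.Adj c r.val.toProd.1
  · set f₀ : IncDart G c := ⟨⟨(c, r.val.toProd.1), h1⟩, Or.inl rfl⟩ with hf₀
    rw [Fintype.sum_eq_single f₀ (fun f hf => by
      have : ¬ (f.val.toProd = (c, r.val.toProd.1)) := by
        intro h
        apply hf
        apply Subtype.ext
        exact SimpleGraph.Dart.ext _ _ h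
      rw [blockD_apply', if_neg this, zero_mul])]
    have hD : blockD G c r f₀ = 1 := by rw [blockD_apply', if_pos rfl]
    rw [hD, one_mul]
    by_cases h2 : G.Adj c s.val.toProd.2
    · set g₀ : IncDart G c := ⟨⟨(s.val.toProd.2, c), h2.symm⟩, Or.inr rfl⟩ with hg₀
      rw [Fintype.sum_eq_single g₀ (fun g hg => by
        obtain ⟨⟨⟨g1, g2⟩, hgadj⟩, hginc⟩ := g
        simp only [blockF, blockE, nbMatrix, hf₀] at *
        by_cases hc : g2 = c
        · subst hc
          by_cases hgs : s.val.toProd.2 = g1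
          · exfalso
            apply hg
            apply Subtype.ext
            exact SimpleGraph.Dart.ext _ _ (by simp [hg₀, hgs])
          · simp [hgs]
        · simp [hc])]
      have hF : blockF G c f₀ g₀ =
          (if s.val.toProd.2 = r.val.toProd.1 then (0:ℝ) else 1) := by
        simp [blockF, nbMatrix, hf₀, hg₀]
      have hE : blockE G c g₀ s = 1 := by
        have : ¬ (s.val.toProd.1 = c) := s.prop.1
        simp [blockE, nbMatrix, hg₀, this]
      rw [hF, hE, if_pos h1, if_pos h2]
      ring
    · rw [if_neg h2]
      rw [Finset.sum_eq_zero (fun g _ => by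
        obtain ⟨⟨⟨g1, g2⟩, hgadj⟩, hginc⟩ := g
        simp only [blockF, blockE, nbMatrix, hf₀] at *
        by_cases hc : g2 = c
        · subst hc
          by_cases hgs : s.val.toProd.2 = g1
          · exact absurd (hgs ▸ hgadj.symm) h2
          · simp [hgs]
        · simp [hc])]
      ring
  · rw [if_neg h1, Finset.sum_eq_zero (fun f _ => by
      have : ¬ (f.val.toProd = (c, r.val.toProd.1)) := by
        intro h
        apply h1
        have := f.val.adj
        rw [h] at this
        exact this
      rw [blockD_apply', if_neg this, zero_mul])]
    simp

lemma PX_apply (r s : NonIncDart G c) :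
    (swapMat G c * blockX G c) r s = (if G.Adj c r.val.toProd.2 then (1:ℝ) else 0) *
      ((if G.Adj c s.val.toProd.2 then (1:ℝ) else 0) *
        (if s.val.toProd.2 = r.val.toProd.2 then (0:ℝ) else 1)) := by
  set t₀ : NonIncDart G c := ⟨r.val.symm, ⟨r.prop.2, r.prop.1⟩⟩ with ht₀
  have : (swapMat G c * blockX G c) r s = blockX G c t₀ s := by
    rw [Matrix.mul_apply]
    rw [Fintype.sum_eq_single t₀ (fun t ht => by
      have : ¬ (t.val = r.val.symm) := fun h => ht (Subtype.ext h)
      simp [swapMat, this])]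
    simp [swapMat, ht₀]
  rw [this, blockX_apply]
  rfl

lemma vertSum_mul_sum (z : NonIncDart G c → ℝ) (g : V → ℝ) :
    ∑ i, vertSum G c z i * g i = ∑ r : NonIncDart G c, z r * g r.val.toProd.2 := by
  unfold vertSum
  simp only [Finset.sum_mul, ite_mul, zero_mul]
  rw [Finset.sum_comm]
  refine Finset.sum_congr rfl fun r _ => ?_
  simp [Finset.sum_ite_eq]

end Aux

section Main

variable {V : Type*} [Fintype V] [DecidableEq V] (G : SimpleGraph V) [DecidableRel G.Adj] (c : V)

lemma alg_identity (a x : V → ℝ) (ha : ∀ i, a i = 0 ∨ a i = 1) :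
    ∑ i, x i * (a i * ∑ j, x j * (a j * (if j = i then (0:ℝ) else 1))) =
      (∑ i, a i * x i) ^ 2 - ∑ i, a i * x i ^ 2 := by
  have key : ∀ i, ∑ j, x j * (a j * (if j = i then (0:ℝ) else 1)) =
      (∑ j, a j * x j) - a i * x i := by
    intro i
    have h : ∀ j, x j * (a j * (if j = i then (0:ℝ) else 1)) =
        a j * x j - (if j = i then a j * x j else 0) := by
      intro j; by_cases hj : j = i <;> simp [hj] <;> ring
    simp only [h, Finset.sum_sub_distrib]
    rw [Finset.sum_ite_eq' Finset.univ i (fun j => a j * x j)]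
    simp
  simp only [key]
  have expand : ∀ i, x i * (a i * ((∑ j, a j * x j) - a i * x i)) =
      (a i * x i) * (∑ j, a j * x j) - a i * x i ^ 2 := by
    intro i; rcases ha i with h | h <;> simp [h] <;> ring
  simp only [expand, Finset.sum_sub_distrib, ← Finset.sum_mul]
  ring

theorem quadratic_form_PX' (z : NonIncDart G c → ℝ) :
    z ⬝ᵥ (swapMat G c * blockX G c).mulVec z =
      (∑ i, (if G.Adj c i then (1 : ℝ) else 0) * vertSum G c z i) ^ 2 -
        ∑ i, (if G.Adj c i then (1 : ℝ) else 0) * (vertSum G c z i) ^ 2 := by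
  have h1 : z ⬝ᵥ (swapMat G c * blockX G c).mulVec z =
      ∑ r : NonIncDart G c, z r * ((if G.Adj c r.val.toProd.2 then (1:ℝ) else 0) *
        ∑ s : NonIncDart G c, z s * ((if G.Adj c s.val.toProd.2 then (1:ℝ) else 0) *
          (if s.val.toProd.2 = r.val.toProd.2 then (0:ℝ) else 1))) := by
    simp only [dotProduct, Matrix.mulVec, PX_apply]
    refine Finset.sum_congr rfl fun r _ => ?_
    congr 1
    rw [Finset.mul_sum]
    refine Finset.sum_congr rfl fun s _ => ?_
    ring
  rw [h1, ← vertSum_mul_sum G c z (fun i => (if G.Adj c i then (1:ℝ) else 0) *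
      ∑ s : NonIncDart G c, z s * ((if G.Adj c s.val.toProd.2 then (1:ℝ) else 0) *
        (if s.val.toProd.2 = i then (0:ℝ) else 1)))]
  have h2 : ∀ i : V, (∑ s : NonIncDart G c, z s * ((if G.Adj c s.val.toProd.2 then (1:ℝ) else 0) *
      (if s.val.toProd.2 = i then (0:ℝ) else 1))) =
      ∑ j, vertSum G c z j * ((if G.Adj c j then (1:ℝ) else 0) *
        (if j = i then (0:ℝ) else 1)) := by
    intro i
    rw [vertSum_mul_sum G c z (fun j => (if G.Adj c j then (1:ℝ) else 0) *
      (if j = i then (0:ℝ) else 1))]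
  simp only [h2]
  exact alg_identity (fun i => if G.Adj c i then (1:ℝ) else 0) (vertSum G c z)
    (fun i => by by_cases h : G.Adj c i <;> simp [h])

end Main

theorem quadratic_form_PX {V : Type*} [Fintype V] [DecidableEq V]
    (G : SimpleGraph V) [DecidableRel G.Adj] (c : V) (z : NonIncDart G c → ℝ) :
    z ⬝ᵥ (swapMat G c * blockX G c).mulVec z =
      (∑ i, (if G.Adj c i then (1 : ℝ) else 0) * vertSum G c z i) ^ 2 -
        ∑ i, (if G.Adj c i then (1 : ℝ) else 0) * (vertSum G c z i) ^ 2 := by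
  exact quadratic_form_PX' G c z
end

section
/- With 𝟙 the all-ones vector indexed by the directed edges of G not incident to c, one has 𝟙ᵀ P X 𝟙 = (Σ_i a_{ci} (d_i − 1))² − Σ_i a_{ci} (d_i − 1)², where d_i denotes the degree of node i in the original graph G (before removing c). This quantity is the X-degree centrality of c. -/
open Matrix

section Aux
open Finset
set_option linter.unusedSectionVars false

variable {V : Type*} [Fintype V] [DecidableEq V] (G : SimpleGraph V) [DecidableRel G.Adj]

private def dartEquivAux : G.Dart ≃ Σ v : V, G.neighborSet v where
  toFun := fun d => ⟨d.toProd.1, d.toProd.2, d.adj⟩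
  invFun := fun p => ⟨(p.1, p.2.1), p.2.2⟩
  left_inv := fun _ => rfl
  right_inv := fun _ => rfl

lemma dart_sum' (f : V → V → ℝ) :
    ∑ e : G.Dart, f e.toProd.1 e.toProd.2 =
      ∑ v, ∑ w, if G.Adj v w then f v w else 0 := by
  rw [← Equiv.sum_comp (dartEquivAux G).symm (fun d => f d.toProd.1 d.toProd.2),
    ← Finset.univ_sigma_univ, Finset.sum_sigma]
  refine Finset.sum_congr rfl fun v _ => ?_
  rw [← Finset.sum_filter]
  show ∑ s : (G.neighborSet v), f v s = _
  exact (Finset.sum_subtype (univ.filter (G.Adj v)) (fun x => by simp) (fun w => f v w)).symm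

lemma subtype_sum' {p : G.Dart → Prop} [DecidablePred p] (f : G.Dart → ℝ) :
    ∑ r : {e : G.Dart // p e}, f r.val = ∑ e : G.Dart, if p e then f e else 0 := by
  rw [← Finset.sum_filter]
  exact (Finset.sum_subtype (univ.filter p) (fun x => by simp) f).symm

lemma degree_sum' (j : V) :
    (G.degree j : ℝ) = ∑ w, if G.Adj j w then (1:ℝ) else 0 := by
  rw [SimpleGraph.degree, SimpleGraph.neighborFinset_eq_filter, Finset.card_filter]
  push_cast
  rfl

variable (c : V)

lemma ones_vecMul_swap :
    (fun _ => (1:ℝ)) ᵥ* swapMat G c = (fun _ => (1:ℝ)) := by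
  funext s
  simp only [vecMul, dotProduct, swapMat, one_mul]
  have key : ∀ r : NonIncDart G c, (s.val = r.val.symm) ↔
      (r = (⟨s.val.symm, s.prop.2, s.prop.1⟩ : NonIncDart G c)) := by
    intro r
    constructor
    · intro h
      apply Subtype.ext
      show r.val = s.val.symm
      rw [h, SimpleGraph.Dart.symm_symm]
    · intro h
      rw [h]
      exact (SimpleGraph.Dart.symm_symm s.val).symm
  simp only [key]
  rw [Finset.sum_ite_eq' univ _ (fun _ => (1:ℝ))]
  simp

lemma ones_vecMul_D (t : IncDart G c) :
    ((fun _ => (1:ℝ)) ᵥ* blockD G c) t =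
      if t.val.toProd.1 = c then ((G.degree t.val.toProd.2 : ℝ) - 1) else 0 := by
  simp only [vecMul, dotProduct, blockD, one_mul]
  rw [subtype_sum' G (fun e => nbMatrix G e t.val)]
  unfold nbMatrix
  rw [dart_sum' G (fun v w => if v ≠ c ∧ w ≠ c then
      (if t.val.toProd.2 = v then (1:ℝ) else 0) * (if t.val.toProd.1 = w then 0 else 1) else 0)]
  by_cases h : t.val.toProd.1 = c
  · rw [if_pos h]
    have hadj : G.Adj c t.val.toProd.2 := by have := t.val.adj; rwa [h] at this
    have hne : t.val.toProd.2 ≠ c := hadj.ne'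
    rw [Finset.sum_eq_single t.val.toProd.2 ?h₁ (by simp)]
    · have step : ∀ w ∈ (univ : Finset V),
          (if G.Adj t.val.toProd.2 w then
            (if t.val.toProd.2 ≠ c ∧ w ≠ c then
              (if t.val.toProd.2 = t.val.toProd.2 then (1:ℝ) else 0) *
                (if t.val.toProd.1 = w then 0 else 1) else 0) else 0) =
          (if G.Adj t.val.toProd.2 w then (1:ℝ) else 0) -
            (if w = c then (if G.Adj t.val.toProd.2 w then (1:ℝ) else 0) else 0) := by
        intro w _
        by_cases haw : G.Adj t.val.toProd.2 w
        · by_cases hwc : w = c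
          · subst hwc; simp [haw, hne]
          · have hcw : ¬ c = w := fun hh => hwc hh.symm
            simp [haw, hne, hwc, h, hcw]
        · simp [haw]
      rw [Finset.sum_congr rfl step, Finset.sum_sub_distrib, degree_sum' G t.val.toProd.2]
      congr 1
      rw [Finset.sum_ite_eq' univ c (fun w => if G.Adj t.val.toProd.2 w then (1:ℝ) else 0)]
      simp [hadj.symm]
    · intro v _ hv
      rw [Finset.sum_eq_zero]
      intro w _
      have htv : ¬ t.val.toProd.2 = v := fun hh => hv hh.symm
      by_cases haw : G.Adj v w <;> simp [haw, htv]
  · rw [if_neg h]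
    have h2 : t.val.toProd.2 = c := t.prop.resolve_left h
    rw [Finset.sum_eq_zero]
    intro v _
    rw [Finset.sum_eq_zero]
    intro w _
    by_cases hvc : v = c
    · subst hvc; simp
    · have hcv : ¬ c = v := fun hh => hvc hh.symm
      simp [h2, hcv]

lemma E_mulVec_ones (u : IncDart G c) :
    ((blockE G c).mulVec (fun _ => (1:ℝ))) u =
      if u.val.toProd.2 = c then ((G.degree u.val.toProd.1 : ℝ) - 1) else 0 := by
  simp only [mulVec, dotProduct, blockE, mul_one]
  rw [subtype_sum' G (fun e => nbMatrix G u.val e)]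
  unfold nbMatrix
  rw [dart_sum' G (fun v w => if v ≠ c ∧ w ≠ c then
      (if w = u.val.toProd.1 then (1:ℝ) else 0) * (if v = u.val.toProd.2 then 0 else 1) else 0)]
  by_cases h : u.val.toProd.2 = c
  · rw [if_pos h]
    have hadj : G.Adj u.val.toProd.1 c := by have := u.val.adj; rwa [h] at this
    have hne : u.val.toProd.1 ≠ c := hadj.ne
    have step : ∀ v ∈ (univ : Finset V),
        (∑ w, if G.Adj v w then
          (if v ≠ c ∧ w ≠ c then
            (if w = u.val.toProd.1 then (1:ℝ) else 0) *
              (if v = u.val.toProd.2 then 0 else 1) else 0) else 0) =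
        (if G.Adj u.val.toProd.1 v then (1:ℝ) else 0) -
          (if v = c then (if G.Adj u.val.toProd.1 v then (1:ℝ) else 0) else 0) := by
      intro v _
      rw [Finset.sum_eq_single u.val.toProd.1 ?h₂ (by simp)]
      · by_cases hav : G.Adj v u.val.toProd.1
        · by_cases hvc : v = c
          · subst hvc; simp [hav.symm, h]
          · simp [hav, hav.symm, hvc, hne, h]
        · have h3 : ¬ G.Adj u.val.toProd.1 v := fun hh => hav hh.symm
          simp [hav, h3]
      · intro w _ hw
        by_cases haw : G.Adj v w <;> simp [haw, hw]
    rw [Finset.sum_congr rfl step, Finset.sum_sub_distrib, degree_sum' G u.val.toProd.1]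
    congr 1
    rw [Finset.sum_ite_eq' univ c (fun v => if G.Adj u.val.toProd.1 v then (1:ℝ) else 0)]
    simp [hadj]
  · rw [if_neg h]
    have h2 : u.val.toProd.1 = c := u.prop.resolve_right h
    rw [Finset.sum_eq_zero]
    intro v _
    rw [Finset.sum_eq_zero]
    intro w _
    by_cases hwc : w = c
    · subst hwc; simp
    · simp [h2, hwc]


/-- Inner vector: for a row dart `a → b` not incident to `c`, the value
`∑ u (blockF)_{(a→b) row? , u} * vE u` as a function of the endpoints. -/
def innerF (a b : V) : ℝ := ∑ u : IncDart G c,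
  (if u.val.toProd.2 = a then (1:ℝ) else 0) * (if u.val.toProd.1 = b then 0 else 1) *
    (if u.val.toProd.2 = c then ((G.degree u.val.toProd.1 : ℝ) - 1) else 0)

lemma innerF_eval (b : V) : innerF G c c b =
    (∑ i, (if G.Adj c i then (1:ℝ) else 0) * ((G.degree i : ℝ) - 1)) -
      (if G.Adj c b then (1:ℝ) else 0) * ((G.degree b : ℝ) - 1) := by
  unfold innerF
  rw [subtype_sum' G (fun e => (if e.toProd.2 = c then (1:ℝ) else 0) *
      (if e.toProd.1 = b then 0 else 1) *
      (if e.toProd.2 = c then ((G.degree e.toProd.1 : ℝ) - 1) else 0))]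
  rw [dart_sum' G (fun v w => if (v = c ∨ w = c) then
      (if w = c then (1:ℝ) else 0) * (if v = b then 0 else 1) *
        (if w = c then ((G.degree v : ℝ) - 1) else 0) else 0)]
  have step : ∀ v ∈ (univ : Finset V),
      (∑ w, if G.Adj v w then (if (v = c ∨ w = c) then
        (if w = c then (1:ℝ) else 0) * (if v = b then 0 else 1) *
          (if w = c then ((G.degree v : ℝ) - 1) else 0) else 0) else 0) =
      (if G.Adj c v then (1:ℝ) else 0) * ((G.degree v : ℝ) - 1) -
        (if v = b then (if G.Adj c v then (1:ℝ) else 0) * ((G.degree v : ℝ) - 1) else 0) := by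
    intro v _
    rw [Finset.sum_eq_single c ?hz (by simp)]
    · by_cases hvc : G.Adj v c
      · have hvc' : G.Adj c v := hvc.symm
        by_cases hvb : v = b <;> simp [hvc, hvc', hvb]
      · have hvc' : ¬ G.Adj c v := fun hh => hvc hh.symm
        simp [hvc, hvc']
    · intro w _ hw
      by_cases haw : G.Adj v w <;> simp [haw, hw]
  rw [Finset.sum_congr rfl step, Finset.sum_sub_distrib]
  congr 1
  rw [Finset.sum_ite_eq' univ b
    (fun v => (if G.Adj c v then (1:ℝ) else 0) * ((G.degree v : ℝ) - 1))]
  simp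

end Aux

open Finset in
theorem xdegree_centrality {V : Type*} [Fintype V] [DecidableEq V]
    (G : SimpleGraph V) [DecidableRel G.Adj] (c : V) :
    (fun _ => (1 : ℝ)) ⬝ᵥ (swapMat G c * blockX G c).mulVec (fun _ => (1 : ℝ)) =
      (∑ i, (if G.Adj c i then (1 : ℝ) else 0) * ((G.degree i : ℝ) - 1)) ^ 2 -
        ∑ i, (if G.Adj c i then (1 : ℝ) else 0) * ((G.degree i : ℝ) - 1) ^ 2 := by
  classical
  set A : ℝ := ∑ i, (if G.Adj c i then (1 : ℝ) else 0) * ((G.degree i : ℝ) - 1) with hA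
  rw [Matrix.dotProduct_mulVec, ← Matrix.vecMul_vecMul, ones_vecMul_swap,
    ← Matrix.dotProduct_mulVec]
  unfold blockX
  rw [← Matrix.mulVec_mulVec, ← Matrix.mulVec_mulVec, Matrix.dotProduct_mulVec]
  -- now : (1 ᵥ* blockD) ⬝ᵥ (blockF.mulVec (blockE.mulVec 1)) = ...
  have step1 : ((fun _ => (1:ℝ)) ᵥ* blockD G c) ⬝ᵥ
      ((blockF G c).mulVec ((blockE G c).mulVec (fun _ => (1:ℝ)))) =
      ∑ t : IncDart G c, (if t.val.toProd.1 = c then ((G.degree t.val.toProd.2 : ℝ) - 1) else 0) *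
        innerF G c t.val.toProd.1 t.val.toProd.2 := by
    have hvE : (blockE G c).mulVec (fun _ => (1:ℝ)) = fun u =>
        if u.val.toProd.2 = c then ((G.degree u.val.toProd.1 : ℝ) - 1) else 0 :=
      funext (E_mulVec_ones G c)
    rw [hvE]
    simp only [dotProduct]
    refine Finset.sum_congr rfl fun t _ => ?_
    rw [ones_vecMul_D]
    congr 1
  rw [step1]
  rw [subtype_sum' G (fun e => (if e.toProd.1 = c then ((G.degree e.toProd.2 : ℝ) - 1) else 0) *
      innerF G c e.toProd.1 e.toProd.2)]
  rw [dart_sum' G (fun v w => if (v = c ∨ w = c) then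
      (if v = c then ((G.degree w : ℝ) - 1) else 0) * innerF G c v w else 0)]
  rw [Finset.sum_eq_single c ?hz (by simp)]
  · have step2 : ∀ w ∈ (univ : Finset V),
        (if G.Adj c w then (if (c = c ∨ w = c) then
          (if c = c then ((G.degree w : ℝ) - 1) else 0) * innerF G c c w else 0) else 0) =
        ((if G.Adj c w then (1:ℝ) else 0) * ((G.degree w : ℝ) - 1)) * A -
          (if G.Adj c w then (1:ℝ) else 0) * ((G.degree w : ℝ) - 1) ^ 2 := by
      intro w _
      by_cases haw : G.Adj c w
      · rw [if_pos haw, if_pos (Or.inl rfl : c = c ∨ w = c), if_pos (rfl : c = c),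
          innerF_eval, ← hA, if_pos haw]
        ring
      · simp [haw]
    rw [Finset.sum_congr rfl step2, Finset.sum_sub_distrib, ← Finset.sum_mul, ← hA, sq A]
  · intro v _ hv
    rw [Finset.sum_eq_zero]
    intro w _
    by_cases haw : G.Adj v w
    · by_cases hwc : w = c <;> simp [haw, hv]
    · simp [haw]
end
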